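/- arXiv:2306.12730 — 4 statements merged into one kernel-verified Lean document; each statement's English description precedes it below -/
import Mathlib

section
/- For any skew-symmetric real d×d matrices E₁ and E₂, the matrix exponential is 1-Lipschitz in Frobenius norm: ‖exp(E₂) − exp(E₁)‖_F ≤ ‖E₂ − E₁‖_F. -/
/-!
Interpolate between the two exponentials along `t ↦ exp (t • E₂) * exp ((1 - t) • E₁)`,
whose derivative is `exp (t • E₂) * (E₂ - E₁) * exp ((1 - t) • E₁)`. For skew-symmetric `E`
every `exp (t • E)` is orthogonal, and the Frobenius norm is invariant under multiplication by
orthogonal matrices on either side, so the derivative has norm `‖E₂ - E₁‖` and the mean value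
inequality concludes.
-/

open Matrix

noncomputable def frobNorm {m n : Type*} [Fintype m] [Fintype n]
    (A : Matrix m n ℝ) : ℝ :=
  Real.sqrt (∑ i, ∑ j, (A i j) ^ 2)

open NormedSpace

theorem norm_exp_sub_exp_le_of_contracting {𝔸 : Type*} [NormedRing 𝔸] [NormedAlgebra ℝ 𝔸]
    [CompleteSpace 𝔸] {a b : 𝔸} (ha : ∀ (t : ℝ) (x : 𝔸), ‖exp (t • a) * x‖ ≤ ‖x‖)
    (hb : ∀ (t : ℝ) (x : 𝔸), ‖x * exp (t • b)‖ ≤ ‖x‖) :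
    ‖exp a - exp b‖ ≤ ‖a - b‖ := by
  set f : ℝ → 𝔸 := fun t => exp (t • a) * exp ((1 - t) • b)
  set f' : ℝ → 𝔸 := fun t => exp (t • a) * (a - b) * exp ((1 - t) • b)
  have hf : ∀ t, HasDerivAt f (f' t) t := by
    intro t
    have hb' := (hasDerivAt_exp_smul_const' b (1 - t)).scomp t ((hasDerivAt_id t).const_sub 1)
    convert (hasDerivAt_exp_smul_const a t).mul hb' using 1
    · rfl
    simp only [f', Function.comp_apply, neg_one_smul, mul_neg, mul_sub, sub_mul, mul_assoc]
    exact sub_eq_add_neg _ _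
  have hf' : ∀ t, ‖f' t‖ ≤ ‖a - b‖ := fun t =>
    calc ‖f' t‖ ≤ ‖exp (t • a) * (a - b)‖ := hb _ _
      _ ≤ ‖a - b‖ := ha _ _
  simpa [f] using Convex.norm_image_sub_le_of_norm_hasDerivWithin_le
    (fun t _ => (hf t).hasDerivWithinAt) (fun t _ => hf' t) convex_univ
    (Set.mem_univ 0) (Set.mem_univ 1)

namespace Matrix

attribute [local instance] frobeniusNormedAddCommGroup frobeniusNormedSpace
  frobeniusNormedRing frobeniusNormedAlgebra

variable {m n 𝕜 : Type*} [Fintype m] [Fintype n] [RCLike 𝕜]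

theorem frobNorm_eq_frobenius_norm (A : Matrix m n ℝ) : frobNorm A = ‖A‖ := by
  simp only [frobNorm, frobenius_norm_def, Real.norm_eq_abs, Real.rpow_two, sq_abs,
    ← Real.sqrt_eq_rpow]

theorem frobenius_norm_sq_eq_re_trace (A : Matrix m n 𝕜) :
    ‖A‖ ^ 2 = RCLike.re (Aᴴ * A).trace := by
  rw [frobenius_norm_def, ← Real.sqrt_eq_rpow, Real.sq_sqrt (by positivity)]
  simp only [trace, diag_apply, mul_apply, conjTranspose_apply, RCLike.star_def,
    RCLike.conj_mul, map_sum, RCLike.re_ofReal_pow, Real.rpow_two]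
  rw [Finset.sum_comm]

theorem frobenius_norm_unitary_mul [DecidableEq m] {U : Matrix m m 𝕜}
    (hU : U ∈ unitaryGroup m 𝕜) (A : Matrix m n 𝕜) : ‖U * A‖ = ‖A‖ := by
  have hUU : Uᴴ * U = 1 := mem_unitaryGroup_iff'.mp hU
  rw [← sq_eq_sq₀ (norm_nonneg _) (norm_nonneg _), frobenius_norm_sq_eq_re_trace,
    frobenius_norm_sq_eq_re_trace, conjTranspose_mul, Matrix.mul_assoc, ← Matrix.mul_assoc Uᴴ,
    hUU, Matrix.one_mul]

theorem frobenius_norm_mul_unitary [DecidableEq n] (A : Matrix m n 𝕜) {U : Matrix n n 𝕜}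
    (hU : U ∈ unitaryGroup n 𝕜) : ‖A * U‖ = ‖A‖ := by
  rw [← frobenius_norm_conjTranspose, conjTranspose_mul, ← star_eq_conjTranspose U,
    frobenius_norm_unitary_mul (Unitary.star_mem hU), frobenius_norm_conjTranspose]

theorem exp_mem_unitaryGroup_of_transpose_eq_neg [DecidableEq n] {E : Matrix n n ℝ}
    (hE : Eᵀ = -E) : exp E ∈ unitaryGroup n ℝ :=
  exp_mem_unitary_of_mem_skewAdjoint (skewAdjoint.mem_iff.mpr hE)

theorem frobenius_norm_exp_sub_exp_le [DecidableEq n] {E₁ E₂ : Matrix n n ℝ} (h₁ : E₁ᵀ = -E₁)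
    (h₂ : E₂ᵀ = -E₂) : ‖exp E₂ - exp E₁‖ ≤ ‖E₂ - E₁‖ := by
  have exp_smul_mem {E : Matrix n n ℝ} (hE : Eᵀ = -E) (t : ℝ) : exp (t • E) ∈ unitaryGroup n ℝ :=
    exp_mem_unitaryGroup_of_transpose_eq_neg (by rw [transpose_smul, hE, smul_neg])
  exact norm_exp_sub_exp_le_of_contracting
    (fun t x => (frobenius_norm_unitary_mul (exp_smul_mem h₂ t) x).le)
    (fun t x => (frobenius_norm_mul_unitary x (exp_smul_mem h₁ t)).le)

end Matrix

/-- For skew-symmetric real `d × d` matrices `E₁`, `E₂`, the matrix exponential is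
`1`-Lipschitz in the Frobenius norm. -/
theorem stmt_0 (d : ℕ) (E₁ E₂ : Matrix (Fin d) (Fin d) ℝ)
    (h₁ : E₁ᵀ = -E₁) (h₂ : E₂ᵀ = -E₂) :
    frobNorm (NormedSpace.exp E₂ - NormedSpace.exp E₁) ≤ frobNorm (E₂ - E₁) := by
  rw [frobNorm_eq_frobenius_norm, frobNorm_eq_frobenius_norm]
  exact frobenius_norm_exp_sub_exp_le h₁ h₂
end

section
/- Let G ∈ ℝ^{nd×d} satisfy GᵀG = n·I_d, let G* ∈ O(d)ⁿ be a block-orthogonal ground truth, let Δ be a symmetric nd×nd matrix, and C = G*G*ᵀ + Δ. If tr(Gᵀ C G) ≥ tr(G*ᵀ C G*), then d_F([G],[G*]) ≤ 4√d‖Δ‖/√n, where d_F([G],[G*]) = min_{Q∈O(d)} ‖G − G*Q‖_F and ‖Δ‖ is the spectral norm. -/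
open Matrix

noncomputable def nuclearNorm {d : ℕ} (M : Matrix (Fin d) (Fin d) ℝ) : ℝ :=
  ∑ i, Real.sqrt ((Matrix.isHermitian_conjTranspose_mul_self M).eigenvalues i)

noncomputable def opNorm {m : Type*} [Fintype m] [DecidableEq m]
    (A : Matrix m m ℝ) : ℝ :=
  ‖Matrix.toEuclideanCLM (𝕜 := ℝ) A‖

def blk {n d : ℕ} (X : Matrix (Fin n × Fin d) (Fin d) ℝ) (i : Fin n) :
    Matrix (Fin d) (Fin d) ℝ :=
  Matrix.of fun a b => X (i, a) b

/-! Let `M = G*ᵀG` and pick an orthogonal `Q` with `tr(QᵀM) = ‖M‖_*` (polar decomposition,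
obtained by completing the normalised columns of `MV`, `V` an eigenbasis of `MᵀM`, to an orthonormal
basis). With `H = G*Q` and `r = ‖G - H‖_F` one has `r² = 2nd - 2‖M‖_*`. Optimality of `G` gives
`n²d + tr(HᵀΔH) ≤ tr(MᵀM) + tr(GᵀΔG)`, and splitting `GᵀΔG - HᵀΔH = GᵀΔ(G - H) + (G - H)ᵀΔH`
bounds the difference of the `Δ`-terms by `2‖Δ‖√(nd) r`. As `‖G*ᵀ‖, ‖G‖ ≤ √n`, the singular values
of `M` are at most `n`, so `tr(MᵀM) ≤ n‖M‖_*`. Together, `n r² ≤ 4‖Δ‖√(nd) r`. -/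

open Finset

section Frobenius

variable {m k : Type*} [Fintype m] [Fintype k]

lemma frobNorm_nonneg (A : Matrix m k ℝ) : 0 ≤ frobNorm A := Real.sqrt_nonneg _

lemma frobNorm_sq (A : Matrix m k ℝ) : frobNorm A ^ 2 = trace (Aᵀ * A) := by
  rw [frobNorm, Real.sq_sqrt (by positivity), trace, sum_comm]
  simp [mul_apply, sq]

lemma frobNorm_eq_sqrt_trace (A : Matrix m k ℝ) : frobNorm A = √(trace (Aᵀ * A)) := by
  rw [← frobNorm_sq, Real.sqrt_sq (frobNorm_nonneg A)]

lemma frobNorm_sub_sq (A B : Matrix m k ℝ) :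
    frobNorm (A - B) ^ 2 = trace (Aᵀ * A) + trace (Bᵀ * B) - 2 * trace (Bᵀ * A) := by
  have : trace (Aᵀ * B) = trace (Bᵀ * A) := by
    rw [← trace_transpose, transpose_mul, transpose_transpose]
  rw [frobNorm_sq, transpose_sub, Matrix.sub_mul, Matrix.mul_sub, Matrix.mul_sub, trace_sub,
    trace_sub, trace_sub, this]
  ring

lemma frobNorm_eq_of_transpose_mul_self [DecidableEq k] {c : ℝ} {A : Matrix m k ℝ}
    (hA : Aᵀ * A = c • 1) : frobNorm A = √(c * Fintype.card k) := by
  rw [frobNorm_eq_sqrt_trace, hA, trace_smul, trace_one, smul_eq_mul]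

lemma frobNorm_sub_sq_of_transpose_mul_self [DecidableEq k] {c : ℝ} {A B : Matrix m k ℝ}
    (hA : Aᵀ * A = c • 1) (hB : Bᵀ * B = c • 1) :
    frobNorm (A - B) ^ 2 = 2 * (c * Fintype.card k) - 2 * trace (Bᵀ * A) := by
  rw [frobNorm_sub_sq, hA, hB, trace_smul, trace_one, smul_eq_mul]
  ring

end Frobenius

section OpNorm

variable {m k : Type*} [Fintype m] [Fintype k] [DecidableEq m]

lemma dotProduct_mulVec_le_opNorm (Δ : Matrix m m ℝ) (x y : m → ℝ) :
    y ⬝ᵥ (Δ *ᵥ x) ≤ opNorm Δ * √(∑ i, x i ^ 2) * √(∑ i, y i ^ 2) := by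
  have hnorm (v : m → ℝ) : ‖WithLp.toLp 2 v‖ = √(∑ i, v i ^ 2) := by
    simp [EuclideanSpace.norm_eq]
  have hinner : y ⬝ᵥ (Δ *ᵥ x) =
      inner ℝ (WithLp.toLp 2 y) (toEuclideanCLM (𝕜 := ℝ) Δ (WithLp.toLp 2 x)) := by
    simp [EuclideanSpace.inner_eq_star_dotProduct, dotProduct_comm]
  rw [hinner, ← hnorm, ← hnorm]
  calc _ ≤ ‖WithLp.toLp 2 y‖ * ‖toEuclideanCLM (𝕜 := ℝ) Δ (WithLp.toLp 2 x)‖ :=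
        real_inner_le_norm _ _
    _ ≤ ‖WithLp.toLp 2 y‖ * (opNorm Δ * ‖WithLp.toLp 2 x‖) := by
        gcongr; exact ContinuousLinearMap.le_opNorm _ _
    _ = _ := by ring

lemma trace_transpose_mul_mul_le (Δ : Matrix m m ℝ) (A B : Matrix m k ℝ) :
    trace (Bᵀ * Δ * A) ≤ opNorm Δ * frobNorm A * frobNorm B := by
  have hcols : trace (Bᵀ * Δ * A) = ∑ j, Bᵀ j ⬝ᵥ (Δ *ᵥ Aᵀ j) := by
    refine sum_congr rfl fun j _ => ?_
    rw [Matrix.mul_assoc]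
    simp only [Matrix.diag, mul_apply, dotProduct, mulVec, transpose_apply, mul_sum]
  have hfrob (X : Matrix m k ℝ) : frobNorm X = √(∑ j, ∑ i, X i j ^ 2) := by
    rw [frobNorm, sum_comm]
  calc trace (Bᵀ * Δ * A)
      ≤ ∑ j, opNorm Δ * √(∑ i, A i j ^ 2) * √(∑ i, B i j ^ 2) :=
        hcols ▸ sum_le_sum fun j _ => dotProduct_mulVec_le_opNorm Δ _ _
    _ = opNorm Δ * ∑ j, √(∑ i, A i j ^ 2) * √(∑ i, B i j ^ 2) := by
        simp only [mul_sum, mul_assoc]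
    _ ≤ opNorm Δ * frobNorm A * frobNorm B := by
        rw [mul_assoc, hfrob, hfrob]
        exact mul_le_mul_of_nonneg_left
          (Real.sum_sqrt_mul_sqrt_le _ (fun _ => by positivity) fun _ => by positivity)
          (norm_nonneg _)

lemma trace_transpose_mul_mul_self_sub_le (Δ : Matrix m m ℝ) (G H : Matrix m k ℝ) :
    trace (Gᵀ * Δ * G) - trace (Hᵀ * Δ * H) ≤
      opNorm Δ * (frobNorm G + frobNorm H) * frobNorm (G - H) := by
  have hsplit : Gᵀ * Δ * G - Hᵀ * Δ * H = Gᵀ * Δ * (G - H) + (G - H)ᵀ * Δ * H := by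
    simp only [transpose_sub, Matrix.mul_sub, Matrix.sub_mul]
    abel
  rw [← trace_sub, hsplit, trace_add]
  linarith [trace_transpose_mul_mul_le Δ (G - H) G, trace_transpose_mul_mul_le Δ H (G - H)]

end OpNorm

lemma transpose_mul_self_eq_of_blk {n d : ℕ} {X : Matrix (Fin n × Fin d) (Fin d) ℝ}
    (hX : ∀ i, (blk X i)ᵀ * blk X i = 1) : Xᵀ * X = (n : ℝ) • 1 := by
  have hsum : Xᵀ * X = ∑ i, (blk X i)ᵀ * blk X i := by
    ext a b
    simp [mul_apply, Fintype.sum_prod_type, blk, Matrix.sum_apply]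
  rw [hsum, sum_congr rfl fun i _ => hX i, sum_const, card_univ, Fintype.card_fin,
    Nat.cast_smul_eq_nsmul]

section Gram

variable {m k : Type*} [Fintype m] [Fintype k]

lemma mulVec_dotProduct_mulVec_self (A : Matrix m k ℝ) (x : k → ℝ) :
    (A *ᵥ x) ⬝ᵥ (A *ᵥ x) = x ⬝ᵥ ((Aᵀ * A) *ᵥ x) := by
  rw [← mulVec_mulVec, dotProduct_mulVec x, vecMul_transpose]

variable [DecidableEq k] {c : ℝ} {A : Matrix m k ℝ}

lemma mulVec_dotProduct_mulVec_self_of_transpose_mul_self (hA : Aᵀ * A = c • 1) (x : k → ℝ) :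
    (A *ᵥ x) ⬝ᵥ (A *ᵥ x) = c * (x ⬝ᵥ x) := by
  rw [mulVec_dotProduct_mulVec_self, hA, smul_mulVec, one_mulVec, dotProduct_smul, smul_eq_mul]

lemma transpose_mulVec_dotProduct_self_le (hc : 0 ≤ c) (hA : Aᵀ * A = c • 1) (w : m → ℝ) :
    (Aᵀ *ᵥ w) ⬝ᵥ (Aᵀ *ᵥ w) ≤ c * (w ⬝ᵥ w) := by
  set u := Aᵀ *ᵥ w
  have hu : u ⬝ᵥ u = w ⬝ᵥ (A *ᵥ u) := by rw [dotProduct_mulVec w, ← mulVec_transpose]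
  have hcs : (w ⬝ᵥ (A *ᵥ u)) ^ 2 ≤ (w ⬝ᵥ w) * ((A *ᵥ u) ⬝ᵥ (A *ᵥ u)) := by
    simpa only [dotProduct, sq] using sum_mul_sq_le_sq_mul_sq univ w (A *ᵥ u)
  rw [← hu, mulVec_dotProduct_mulVec_self_of_transpose_mul_self hA] at hcs
  have hw : 0 ≤ w ⬝ᵥ w := by simpa using dotProduct_self_star_nonneg w
  rcases (show 0 ≤ u ⬝ᵥ u by simpa using dotProduct_self_star_nonneg u).eq_or_lt with h | h
  · rw [← h]; positivity
  · nlinarith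

lemma transpose_mul_mulVec_dotProduct_self_le (hc : 0 ≤ c) {B : Matrix m k ℝ}
    (hA : Aᵀ * A = c • 1) (hB : Bᵀ * B = c • 1) (v : k → ℝ) :
    ((Bᵀ * A) *ᵥ v) ⬝ᵥ ((Bᵀ * A) *ᵥ v) ≤ c ^ 2 * (v ⬝ᵥ v) := by
  calc ((Bᵀ * A) *ᵥ v) ⬝ᵥ ((Bᵀ * A) *ᵥ v) ≤ c * ((A *ᵥ v) ⬝ᵥ (A *ᵥ v)) := by
        rw [← mulVec_mulVec]; exact transpose_mulVec_dotProduct_self_le hc hB _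
    _ = c ^ 2 * (v ⬝ᵥ v) := by
        rw [mulVec_dotProduct_mulVec_self_of_transpose_mul_self hA]; ring

end Gram

lemma trace_transpose_mul_self_le_mul_nuclearNorm {d : ℕ} (M : Matrix (Fin d) (Fin d) ℝ) {c : ℝ}
    (hc : 0 ≤ c) (hM : ∀ v, (M *ᵥ v) ⬝ᵥ (M *ᵥ v) ≤ c ^ 2 * (v ⬝ᵥ v)) :
    trace (Mᵀ * M) ≤ c * nuclearNorm M := by
  set hH := isHermitian_conjTranspose_mul_self M
  have hle (i : Fin d) : hH.eigenvalues i ≤ c ^ 2 := by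
    have hv : (hH.eigenvectorBasis i).ofLp ⬝ᵥ (hH.eigenvectorBasis i).ofLp = 1 := by
      have h := real_inner_self_eq_norm_sq (hH.eigenvectorBasis i)
      rw [hH.eigenvectorBasis.orthonormal.1 i, one_pow] at h
      rwa [EuclideanSpace.inner_eq_star_dotProduct, star_trivial] at h
    rw [hH.eigenvalues_eq i]
    have h := hM (hH.eigenvectorBasis i)
    rw [hv, mul_one, mulVec_dotProduct_mulVec_self] at h
    simpa using h
  calc trace (Mᵀ * M) = ∑ i, hH.eigenvalues i := by
        simpa using hH.trace_eq_sum_eigenvalues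
    _ ≤ ∑ i, c * √(hH.eigenvalues i) := sum_le_sum fun i _ => by
        have h0 : 0 ≤ hH.eigenvalues i := eigenvalues_conjTranspose_mul_self_nonneg M i
        calc hH.eigenvalues i = √(hH.eigenvalues i) * √(hH.eigenvalues i) :=
              (Real.mul_self_sqrt h0).symm
          _ ≤ c * √(hH.eigenvalues i) := by
              gcongr
              exact Real.sqrt_le_iff.mpr ⟨hc, hle i⟩
    _ = c * nuclearNorm M := by rw [nuclearNorm, mul_sum]

lemma exists_orthogonal_eq_mul_diagonal {ι : Type*} [Fintype ι] [DecidableEq ι]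
    (B : Matrix ι ι ℝ) (σ : ι → ℝ) (hB : Bᵀ * B = diagonal fun i => σ i ^ 2) :
    ∃ U : Matrix ι ι ℝ, Uᵀ * U = 1 ∧ B = U * diagonal σ := by
  have hcols (i j : ι) : Bᵀ j ⬝ᵥ Bᵀ i = if i = j then σ i ^ 2 else 0 := by
    simpa [mul_apply, diagonal_apply, dotProduct, mul_comm] using congrFun (congrFun hB i) j
  set v : ι → EuclideanSpace ℝ ι := fun j => WithLp.toLp 2 ((σ j)⁻¹ • Bᵀ j)
  have hv : Orthonormal ℝ (Set.domRestrict {j | σ j ≠ 0} v) := by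
    rw [orthonormal_iff_ite]
    rintro ⟨i, hi⟩ ⟨j, hj⟩
    simp only [Set.domRestrict_apply, v, EuclideanSpace.inner_toLp_toLp, star_trivial,
      dotProduct_smul, smul_dotProduct, hcols, smul_eq_mul, Subtype.mk.injEq]
    split_ifs with h
    · subst h
      have : σ i ≠ 0 := hi
      field_simp
    · simp
  obtain ⟨b, hb⟩ := hv.exists_orthonormalBasis_extension_of_card_eq (by simp)
  set e := EuclideanSpace.basisFun ι ℝ
  refine ⟨e.toBasis.toMatrix b.toBasis, by
    simpa using e.toMatrix_orthonormalBasis_conjTranspose_mul_self b, ?_⟩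
  ext i j
  rw [mul_diagonal]
  by_cases hj : σ j = 0
  · have : Bᵀ j ⬝ᵥ Bᵀ j = 0 := by simpa [hj] using hcols j j
    rw [hj, mul_zero]
    exact congrFun (dotProduct_self_eq_zero.mp this) i
  · have : b j i = (σ j)⁻¹ * B i j := by simp [hb j hj, v]
    show B i j = b j i * σ j
    rw [this]
    field_simp

lemma exists_orthogonal_trace_transpose_mul_eq_nuclearNorm {d : ℕ}
    (M : Matrix (Fin d) (Fin d) ℝ) : ∃ Q, Qᵀ * Q = 1 ∧ trace (Qᵀ * M) = nuclearNorm M := by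
  set hH := isHermitian_conjTranspose_mul_self M
  set V : Matrix (Fin d) (Fin d) ℝ := (hH.eigenvectorUnitary : Matrix (Fin d) (Fin d) ℝ)
  have hV : V * Vᵀ = 1 := by
    simpa [V, star_eq_conjTranspose] using Unitary.mul_star_self_of_mem hH.eigenvectorUnitary.2
  have hD : (M * V)ᵀ * (M * V) = diagonal fun i => √(hH.eigenvalues i) ^ 2 := by
    have h := hH.conjStarAlgAut_star_eigenvectorUnitary
    rw [Unitary.conjStarAlgAut_star_apply] at h
    simp_rw [Real.sq_sqrt (eigenvalues_conjTranspose_mul_self_nonneg M _)]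
    rw [transpose_mul, Matrix.mul_assoc, ← Matrix.mul_assoc Mᵀ, ← Matrix.mul_assoc]
    simp only [star_eq_conjTranspose, conjTranspose_eq_transpose_of_trivial] at h
    exact h
  obtain ⟨U, hU, hMV⟩ := exists_orthogonal_eq_mul_diagonal (M * V) _ hD
  refine ⟨U * Vᵀ, ?_, ?_⟩
  · calc (U * Vᵀ)ᵀ * (U * Vᵀ) = V * (Uᵀ * U) * Vᵀ := by
          simp only [transpose_mul, transpose_transpose, Matrix.mul_assoc]
      _ = 1 := by rw [hU, Matrix.mul_one, hV]
  · calc trace ((U * Vᵀ)ᵀ * M) = trace (Uᵀ * (M * V)) := by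
          rw [transpose_mul, transpose_transpose, Matrix.mul_assoc, trace_mul_comm,
            Matrix.mul_assoc]
      _ = nuclearNorm M := by
          rw [hMV, ← Matrix.mul_assoc, hU, Matrix.one_mul, trace_diagonal, nuclearNorm]

lemma transpose_mul_self_mul_of_orthogonal {m k : Type*} [Fintype m] [Fintype k] [DecidableEq k]
    {c : ℝ} {A : Matrix m k ℝ} {Q : Matrix k k ℝ} (hA : Aᵀ * A = c • 1) (hQ : Qᵀ * Q = 1) :
    (A * Q)ᵀ * (A * Q) = c • 1 := by
  rw [transpose_mul, Matrix.mul_assoc, ← Matrix.mul_assoc Aᵀ, hA, Matrix.smul_mul,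
    Matrix.one_mul, Matrix.mul_smul, hQ]

lemma trace_transpose_mul_add_mul {m k l : Type*} [Fintype m] [Fintype k] [Fintype l]
    (A : Matrix m l ℝ) (Δ : Matrix m m ℝ) (X : Matrix m k ℝ) :
    trace (Xᵀ * (A * Aᵀ + Δ) * X) = trace ((Aᵀ * X)ᵀ * (Aᵀ * X)) + trace (Xᵀ * Δ * X) := by
  rw [Matrix.mul_add, Matrix.add_mul, trace_add, transpose_mul, transpose_transpose]
  simp only [Matrix.mul_assoc]

lemma trace_transpose_mul_mul_of_orthogonal {ι : Type*} [Fintype ι] [DecidableEq ι]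
    {Q : Matrix ι ι ℝ} (hQ : Qᵀ * Q = 1) (X : Matrix ι ι ℝ) : trace (Qᵀ * X * Q) = trace X := by
  rw [trace_mul_comm, ← Matrix.mul_assoc, mul_eq_one_comm.mp hQ, Matrix.one_mul]

lemma le_div_of_mul_sq_le_mul {a c r : ℝ} (ha : 0 ≤ a) (hc : 0 < c) (h : c * r ^ 2 ≤ a * r) :
    r ≤ a / c := by
  rcases le_or_gt r 0 with hr | hr
  · exact hr.trans (div_nonneg ha hc.le)
  · rw [le_div_iff₀ hc]
    nlinarith

theorem exists_orthogonal_frobNorm_sub_le {m : Type*} [Fintype m] [DecidableEq m] {d : ℕ}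
    {c : ℝ} (hc : 0 ≤ c) {G Gs : Matrix m (Fin d) ℝ} {Δ C : Matrix m m ℝ}
    (hG : Gᵀ * G = c • 1) (hGs : Gsᵀ * Gs = c • 1) (hC : C = Gs * Gsᵀ + Δ)
    (hopt : trace (Gsᵀ * C * Gs) ≤ trace (Gᵀ * C * G)) :
    ∃ Q : Matrix (Fin d) (Fin d) ℝ, Qᵀ * Q = 1 ∧
      frobNorm (G - Gs * Q) ≤ 4 * √d * opNorm Δ / √c := by
  obtain ⟨Q, hQ, hQM⟩ := exists_orthogonal_trace_transpose_mul_eq_nuclearNorm (Gsᵀ * G)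
  refine ⟨Q, hQ, ?_⟩
  set M := Gsᵀ * G
  set H := Gs * Q
  set r := frobNorm (G - H)
  have hH : Hᵀ * H = c • 1 := transpose_mul_self_mul_of_orthogonal hGs hQ
  have hr : r ^ 2 = 2 * (c * d) - 2 * nuclearNorm M := by
    rw [frobNorm_sub_sq_of_transpose_mul_self hG hH, Fintype.card_fin, ← hQM, transpose_mul,
      Matrix.mul_assoc]
  have hGC : trace (Gᵀ * C * G) = trace (Mᵀ * M) + trace (Gᵀ * Δ * G) := by
    rw [hC, trace_transpose_mul_add_mul]
  have hGsC : trace (Gsᵀ * C * Gs) = c ^ 2 * d + trace (Hᵀ * Δ * H) := by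
    have hconj : Hᵀ * Δ * H = Qᵀ * (Gsᵀ * Δ * Gs) * Q := by
      simp only [H, transpose_mul, Matrix.mul_assoc]
    rw [hC, trace_transpose_mul_add_mul, hGs, hconj, trace_transpose_mul_mul_of_orthogonal hQ]
    simp [trace_smul]
    ring
  have hΔ : trace (Gᵀ * Δ * G) - trace (Hᵀ * Δ * H) ≤ 2 * (opNorm Δ * √(c * d)) * r := by
    have h := trace_transpose_mul_mul_self_sub_le Δ G H
    rw [frobNorm_eq_of_transpose_mul_self hG, frobNorm_eq_of_transpose_mul_self hH,
      Fintype.card_fin] at h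
    linarith
  have hnuc := trace_transpose_mul_self_le_mul_nuclearNorm M hc
    (transpose_mul_mulVec_dotProduct_self_le hc hG hGs)
  have hN : 0 ≤ nuclearNorm M := sum_nonneg fun _ _ => Real.sqrt_nonneg _
  have hsq : c * r ^ 2 ≤ 4 * (opNorm Δ * √(c * d)) * r := by nlinarith
  rcases hc.eq_or_lt with rfl | hc
  · simp only [Real.sqrt_zero, div_zero]
    nlinarith
  rw [show 4 * √d * opNorm Δ / √c = 4 * (opNorm Δ * √(c * d)) / c by
    rw [Real.sqrt_mul hc.le]
    field_simp
    rw [Real.sq_sqrt hc.le]]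
  exact le_div_of_mul_sq_le_mul
    (mul_nonneg zero_le_four (mul_nonneg (norm_nonneg _) (Real.sqrt_nonneg _))) hc hsq

theorem stmt_7_general (n d : ℕ) (G Gs : Matrix (Fin n × Fin d) (Fin d) ℝ)
    (Δ C : Matrix (Fin n × Fin d) (Fin n × Fin d) ℝ)
    (hG : Gᵀ * G = (n : ℝ) • (1 : Matrix (Fin d) (Fin d) ℝ))
    (hGs : ∀ i, (blk Gs i)ᵀ * blk Gs i = 1)
    (hC : C = Gs * Gsᵀ + Δ)
    (hopt : Matrix.trace (Gᵀ * C * G) ≥ Matrix.trace (Gsᵀ * C * Gs)) :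
    sInf {r : ℝ | ∃ Q : Matrix (Fin d) (Fin d) ℝ, Qᵀ * Q = 1 ∧
        r = frobNorm (G - Gs * Q)} ≤
      4 * Real.sqrt d * opNorm Δ / Real.sqrt n := by
  obtain ⟨Q, hQ, hle⟩ := exists_orthogonal_frobNorm_sub_le (Nat.cast_nonneg n) hG
    (transpose_mul_self_eq_of_blk hGs) hC hopt
  exact csInf_le_of_le ⟨0, by rintro _ ⟨_, _, rfl⟩; exact frobNorm_nonneg _⟩ ⟨Q, hQ, rfl⟩ hle

/-- ℓ₂-estimation error: if `GᵀG = n I`, `C = G*G*ᵀ + Δ` with `Δ` symmetric and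
`tr(GᵀCG) ≥ tr(G*ᵀCG*)`, then `d_F([G],[G*]) ≤ 4√d‖Δ‖/√n`. -/
theorem stmt_7 (n d : ℕ) (G Gs : Matrix (Fin n × Fin d) (Fin d) ℝ)
    (Δ C : Matrix (Fin n × Fin d) (Fin n × Fin d) ℝ)
    (hG : Gᵀ * G = (n : ℝ) • (1 : Matrix (Fin d) (Fin d) ℝ))
    (hGs : ∀ i, (blk Gs i)ᵀ * blk Gs i = 1)
    (hΔ : Δᵀ = Δ) (hC : C = Gs * Gsᵀ + Δ)
    (hopt : Matrix.trace (Gᵀ * C * G) ≥ Matrix.trace (Gsᵀ * C * Gs)) :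
    sInf {r : ℝ | ∃ Q : Matrix (Fin d) (Fin d) ℝ, Qᵀ * Q = 1 ∧
        r = frobNorm (G - Gs * Q)} ≤
      4 * Real.sqrt d * opNorm Δ / Real.sqrt n :=
  stmt_7_general n d G Gs Δ C hG hGs hC hopt
end

section
/- Under the setting of the ℓ₂-estimation lemma (G with GᵀG = nI_d, C = G*G*ᵀ + Δ, tr(GᵀCG) ≥ tr(G*ᵀCG*)), every singular value σ_l(G*ᵀG), l = 1,…,d, satisfies n − 8d‖Δ‖²/n ≤ σ_l(G*ᵀG) ≤ n. -/
/-!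
Write `M = G*ᵀG` and `E = n²d − tr(MᵀM) = ∑ₗ (n² − σₗ²)`; every term is nonnegative because
`‖M‖ ≤ ‖G*‖‖G‖ = n`. For `B = GGᵀ − G*G*ᵀ` one has `tr(B²) = 2E`, while optimality of `G` gives
`E ≤ tr(ΔB)`. As `B` is symmetric of rank at most `2d`,
`tr(ΔB) ≤ ‖Δ‖ ∑ᵢ |λᵢ(B)| ≤ ‖Δ‖ √(2d) √(tr B²) = 2‖Δ‖√(dE)`, hence `E ≤ 4d‖Δ‖²`.
So `σₗ² ≥ n² − 4d‖Δ‖²`, and `σₗ ≥ σₗ²/n` turns this into the lower bound.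
-/

open Matrix

/-- The singular values of a real square matrix `M`: square roots of the eigenvalues
of `MᴴM`. -/
noncomputable def singularValues {d : ℕ} (M : Matrix (Fin d) (Fin d) ℝ) : Fin d → ℝ :=
  fun i => Real.sqrt ((Matrix.isHermitian_conjTranspose_mul_self M).eigenvalues i)

lemma OrthonormalBasis.ofLp_dotProduct_self {ι m : Type*} [Fintype ι] [Fintype m]
    (b : OrthonormalBasis ι ℝ (EuclideanSpace ℝ m)) (i : ι) : ⇑(b i) ⬝ᵥ ⇑(b i) = 1 := by
  have h := b.inner_eq_one i
  rwa [EuclideanSpace.inner_eq_star_dotProduct, star_trivial] at h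

lemma Real.sub_div_le_sqrt {c a x : ℝ} (hc : 0 ≤ c) (hlow : c ^ 2 - a ≤ x) (hup : x ≤ c ^ 2) :
    c - a / c ≤ √x := by
  rcases hc.eq_or_lt with rfl | hc
  · simp
  have hsqrt : √x ≤ c := (Real.sqrt_le_left hc.le).mpr hup
  calc c - a / c = (c ^ 2 - a) / c := by field_simp
    _ ≤ x / c := by gcongr
    _ ≤ √x := by
      rw [div_le_iff₀ hc]
      rcases le_or_gt x 0 with hx | hx
      · exact hx.trans (by positivity)
      · calc x = √x * √x := (Real.mul_self_sqrt hx.le).symm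
          _ ≤ √x * c := by gcongr

namespace Matrix

lemma rank_sub_le {K m n : Type*} [Field K] [Fintype m] [Fintype n] (A B : Matrix m n K) :
    (A - B).rank ≤ A.rank + B.rank := by
  have h : LinearMap.range (A - B).mulVecLin ≤
      LinearMap.range A.mulVecLin ⊔ LinearMap.range B.mulVecLin := by
    rintro _ ⟨x, rfl⟩
    rw [mulVecLin_apply, sub_mulVec]
    exact Submodule.sub_mem_sup (LinearMap.mem_range_self _ x) (LinearMap.mem_range_self _ x)
  exact (Submodule.finrank_mono h).trans (Submodule.finrank_add_le_finrank_add_finrank _ _)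

lemma transpose_mul_self_eq_sum_blk {n d : ℕ} (X : Matrix (Fin n × Fin d) (Fin d) ℝ) :
    Xᵀ * X = ∑ i, (blk X i)ᵀ * blk X i := by
  ext a b
  simp [mul_apply, Fintype.sum_prod_type, blk, Matrix.sum_apply]

section Spectral

variable {m : Type*} [Fintype m] [DecidableEq m]

lemma abs_dotProduct_mulVec_le_opNorm (A : Matrix m m ℝ) (x : m → ℝ) :
    |x ⬝ᵥ A *ᵥ x| ≤ opNorm A * (x ⬝ᵥ x) := by
  have hx : ‖WithLp.toLp 2 x‖ ^ 2 = x ⬝ᵥ x := by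
    rw [← real_inner_self_eq_norm_sq]; rfl
  calc |x ⬝ᵥ A *ᵥ x|
      ≤ ‖WithLp.toLp 2 x‖ * ‖toEuclideanCLM (𝕜 := ℝ) A (WithLp.toLp 2 x)‖ := by
        rw [← inner_toEuclideanCLM]; exact abs_real_inner_le_norm _ _
    _ ≤ ‖WithLp.toLp 2 x‖ * (opNorm A * ‖WithLp.toLp 2 x‖) := by
        gcongr; exact ContinuousLinearMap.le_opNorm _ _
    _ = opNorm A * (x ⬝ᵥ x) := by rw [← hx]; ring

lemma trace_eq_sum_dotProduct_mulVec (A : Matrix m m ℝ)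
    (b : OrthonormalBasis m ℝ (EuclideanSpace ℝ m)) :
    A.trace = ∑ i, ⇑(b i) ⬝ᵥ A *ᵥ ⇑(b i) := by
  have h := LinearMap.trace_eq_sum_inner (toEuclideanLin A) b
  unfold toEuclideanLin at h
  rw [toLpLin_eq_toLin, LinearMap.trace_eq_matrix_trace ℝ (PiLp.basisFun 2 ℝ m),
    LinearMap.toMatrix_toLin] at h
  rw [h]
  exact Finset.sum_congr rfl fun i _ => inner_toEuclideanCLM A _ _

namespace IsHermitian

variable {B : Matrix m m ℝ}

lemma trace_mul_eq_sum_eigenvalues_mul (hB : B.IsHermitian) (A : Matrix m m ℝ) :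
    (A * B).trace = ∑ i, hB.eigenvalues i *
      (⇑(hB.eigenvectorBasis i) ⬝ᵥ A *ᵥ ⇑(hB.eigenvectorBasis i)) := by
  rw [trace_eq_sum_dotProduct_mulVec _ hB.eigenvectorBasis]
  refine Finset.sum_congr rfl fun i _ => ?_
  rw [← mulVec_mulVec, hB.mulVec_eigenvectorBasis, mulVec_smul, dotProduct_smul, smul_eq_mul]

lemma trace_mul_self_eq_sum_sq_eigenvalues (hB : B.IsHermitian) :
    (B * B).trace = ∑ i, hB.eigenvalues i ^ 2 := by
  rw [trace_mul_eq_sum_eigenvalues_mul hB B]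
  refine Finset.sum_congr rfl fun i _ => ?_
  rw [hB.mulVec_eigenvectorBasis, dotProduct_smul, smul_eq_mul,
    OrthonormalBasis.ofLp_dotProduct_self, sq, mul_one]

lemma sum_abs_eigenvalues_le (hB : B.IsHermitian) :
    ∑ i, |hB.eigenvalues i| ≤ √(B.rank : ℝ) * √(B * B).trace := by
  set s := Finset.univ.filter fun i => hB.eigenvalues i ≠ 0
  have hsupp : ∑ i, |hB.eigenvalues i| = ∑ i ∈ s, |hB.eigenvalues i| :=
    (Finset.sum_filter_of_ne fun i _ h => abs_ne_zero.mp h).symm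
  have hrank : (B.rank : ℝ) = s.card := by
    rw [hB.rank_eq_card_non_zero_eigs, Fintype.card_subtype]
  rw [hsupp, hrank, trace_mul_self_eq_sum_sq_eigenvalues hB, ← Real.sqrt_mul (by positivity)]
  refine Real.le_sqrt_of_sq_le ((sq_sum_le_card_mul_sum_sq ..).trans ?_)
  gcongr
  calc ∑ i ∈ s, |hB.eigenvalues i| ^ 2 = ∑ i ∈ s, hB.eigenvalues i ^ 2 := by simp_rw [sq_abs]
    _ ≤ ∑ i, hB.eigenvalues i ^ 2 :=
      Finset.sum_le_sum_of_subset_of_nonneg (Finset.subset_univ _) fun i _ _ => sq_nonneg _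

lemma trace_mul_le_opNorm_mul (hB : B.IsHermitian) (A : Matrix m m ℝ) :
    (A * B).trace ≤ opNorm A * (√(B.rank : ℝ) * √(B * B).trace) := by
  rw [trace_mul_eq_sum_eigenvalues_mul hB]
  calc ∑ i, hB.eigenvalues i * (⇑(hB.eigenvectorBasis i) ⬝ᵥ A *ᵥ ⇑(hB.eigenvectorBasis i))
      ≤ ∑ i, opNorm A * |hB.eigenvalues i| := by
        refine Finset.sum_le_sum fun i _ => (le_abs_self _).trans ?_
        rw [abs_mul, mul_comm]
        have := abs_dotProduct_mulVec_le_opNorm A (hB.eigenvectorBasis i)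
        rw [OrthonormalBasis.ofLp_dotProduct_self, mul_one] at this
        gcongr
    _ ≤ opNorm A * (√(B.rank : ℝ) * √(B * B).trace) := by
        rw [← Finset.mul_sum]
        exact mul_le_mul_of_nonneg_left (sum_abs_eigenvalues_le hB) (norm_nonneg _)

lemma sub_eigenvalues_le_card_mul_sub_trace (hB : B.IsHermitian) {t : ℝ}
    (ht : ∀ i, hB.eigenvalues i ≤ t) (l : m) :
    t - hB.eigenvalues l ≤ t * Fintype.card m - B.trace := by
  have htr : B.trace = ∑ i, hB.eigenvalues i := by simpa using hB.trace_eq_sum_eigenvalues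
  have h := Finset.single_le_sum (fun i _ => sub_nonneg.mpr (ht i)) (Finset.mem_univ l)
  rwa [Finset.sum_sub_distrib, ← htr, Finset.sum_const, Finset.card_univ, nsmul_eq_mul,
    mul_comm] at h

end IsHermitian

end Spectral

lemma trace_mul_transpose_mul_mul_transpose {p q : Type*} [Fintype p] [Fintype q]
    (A B : Matrix p q ℝ) :
    (A * Aᵀ * (B * Bᵀ)).trace = ((Bᵀ * A)ᵀ * (Bᵀ * A)).trace := by
  rw [transpose_mul, transpose_transpose, Matrix.mul_assoc, trace_mul_comm A]
  simp only [Matrix.mul_assoc]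

section ScaledIsometry

variable {p q : Type*} [Fintype p] [Fintype q] [DecidableEq q]

lemma mulVec_dotProduct_mulVec_of_transpose_mul_self {X : Matrix p q ℝ} {c : ℝ}
    (hX : Xᵀ * X = c • 1) (v : q → ℝ) : X *ᵥ v ⬝ᵥ X *ᵥ v = c * (v ⬝ᵥ v) := by
  have h : X *ᵥ v ⬝ᵥ X *ᵥ v = v ⬝ᵥ Xᵀ *ᵥ (X *ᵥ v) := by
    rw [dotProduct_mulVec v Xᵀ, vecMul_transpose]
  rw [h, mulVec_mulVec, hX, smul_mulVec, one_mulVec, dotProduct_smul, smul_eq_mul]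

lemma transpose_mulVec_dotProduct_le_of_transpose_mul_self {X : Matrix p q ℝ} {c : ℝ}
    (hX : Xᵀ * X = c • 1) (hc : 0 ≤ c) (y : p → ℝ) :
    Xᵀ *ᵥ y ⬝ᵥ Xᵀ *ᵥ y ≤ c * (y ⬝ᵥ y) := by
  set z := Xᵀ *ᵥ y
  have hz : z ⬝ᵥ z = X *ᵥ z ⬝ᵥ y := by
    rw [dotProduct_comm (X *ᵥ z), dotProduct_mulVec, ← mulVec_transpose, transpose_transpose,
      dotProduct_comm]
  have hCS : (X *ᵥ z ⬝ᵥ y) ^ 2 ≤ (X *ᵥ z ⬝ᵥ X *ᵥ z) * (y ⬝ᵥ y) := by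
    simpa only [dotProduct, sq] using Finset.sum_mul_sq_le_sq_mul_sq Finset.univ (X *ᵥ z) y
  rw [← hz, mulVec_dotProduct_mulVec_of_transpose_mul_self hX] at hCS
  have hz0 : 0 ≤ z ⬝ᵥ z := by simpa using dotProduct_self_star_nonneg z
  have hy0 : 0 ≤ y ⬝ᵥ y := by simpa using dotProduct_self_star_nonneg y
  rcases hz0.eq_or_lt with h | h
  · rw [← h]
    exact mul_nonneg hc hy0
  · exact le_of_mul_le_mul_left (by linarith) h

lemma eigenvalues_transpose_mul_le {X Y : Matrix p q ℝ} {a b : ℝ} (hX : Xᵀ * X = a • 1)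
    (hY : Yᵀ * Y = b • 1) (ha : 0 ≤ a) (l : q) :
    (isHermitian_conjTranspose_mul_self (Xᵀ * Y)).eigenvalues l ≤ a * b := by
  set v := ⇑((isHermitian_conjTranspose_mul_self (Xᵀ * Y)).eigenvectorBasis l)
  have hl : (isHermitian_conjTranspose_mul_self (Xᵀ * Y)).eigenvalues l
      = Xᵀ *ᵥ (Y *ᵥ v) ⬝ᵥ Xᵀ *ᵥ (Y *ᵥ v) := by
    rw [IsHermitian.eigenvalues_eq, ← mulVec_mulVec, dotProduct_mulVec, vecMul_conjTranspose,
      RCLike.re_to_real]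
    simp only [star_trivial, mulVec_mulVec, v]
  calc _ = Xᵀ *ᵥ (Y *ᵥ v) ⬝ᵥ Xᵀ *ᵥ (Y *ᵥ v) := hl
    _ ≤ a * (Y *ᵥ v ⬝ᵥ Y *ᵥ v) := transpose_mulVec_dotProduct_le_of_transpose_mul_self hX ha _
    _ = a * b := by
      rw [mulVec_dotProduct_mulVec_of_transpose_mul_self hY, OrthonormalBasis.ofLp_dotProduct_self,
        mul_one]

variable {G Gs : Matrix p q ℝ} {c : ℝ}

lemma trace_sq_mul_transpose (hG : Gᵀ * G = c • 1) :
    (G * Gᵀ * (G * Gᵀ)).trace = c ^ 2 * Fintype.card q := by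
  rw [trace_mul_transpose_mul_mul_transpose, hG]
  simp [sq, mul_assoc]

lemma trace_sq_sub_mul_transpose (hG : Gᵀ * G = c • 1) (hGs : Gsᵀ * Gs = c • 1) :
    ((G * Gᵀ - Gs * Gsᵀ) * (G * Gᵀ - Gs * Gsᵀ)).trace
      = 2 * (c ^ 2 * Fintype.card q - ((Gsᵀ * G)ᵀ * (Gsᵀ * G)).trace) := by
  have hcross : (Gs * Gsᵀ * (G * Gᵀ)).trace = ((Gsᵀ * G)ᵀ * (Gsᵀ * G)).trace := by
    rw [trace_mul_transpose_mul_mul_transpose]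
    simp only [transpose_mul, transpose_transpose]
    exact trace_mul_comm _ _
  rw [sub_mul, mul_sub, mul_sub, trace_sub, trace_sub, trace_sub, trace_sq_mul_transpose hG,
    trace_sq_mul_transpose hGs, hcross, trace_mul_transpose_mul_mul_transpose]
  ring

lemma sub_trace_le_trace_mul_sub (hGs : Gsᵀ * Gs = c • 1) (Δ : Matrix p p ℝ)
    (hopt : (Gᵀ * (Gs * Gsᵀ + Δ) * G).trace ≥ (Gsᵀ * (Gs * Gsᵀ + Δ) * Gs).trace) :
    c ^ 2 * Fintype.card q - ((Gsᵀ * G)ᵀ * (Gsᵀ * G)).trace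
      ≤ (Δ * (G * Gᵀ - Gs * Gsᵀ)).trace := by
  have hsplit : ∀ X : Matrix p q ℝ, (Xᵀ * (Gs * Gsᵀ + Δ) * X).trace
      = ((Gsᵀ * X)ᵀ * (Gsᵀ * X)).trace + (Δ * (X * Xᵀ)).trace := by
    intro X
    rw [Matrix.mul_add, Matrix.add_mul, trace_add, transpose_mul, transpose_transpose]
    congr 1
    · simp only [Matrix.mul_assoc]
    · rw [trace_mul_comm, ← Matrix.mul_assoc, trace_mul_comm]
  rw [hsplit, hsplit, ← trace_mul_transpose_mul_mul_transpose Gs Gs, trace_sq_mul_transpose hGs]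
    at hopt
  rw [mul_sub, trace_sub]
  linarith

theorem sq_mul_card_sub_trace_le [DecidableEq p] (hG : Gᵀ * G = c • 1) (hGs : Gsᵀ * Gs = c • 1)
    (Δ : Matrix p p ℝ)
    (hopt : (Gᵀ * (Gs * Gsᵀ + Δ) * G).trace ≥ (Gsᵀ * (Gs * Gsᵀ + Δ) * Gs).trace) :
    c ^ 2 * Fintype.card q - ((Gsᵀ * G)ᵀ * (Gsᵀ * G)).trace
      ≤ 4 * Fintype.card q * opNorm Δ ^ 2 := by
  set B := G * Gᵀ - Gs * Gsᵀ
  set E := c ^ 2 * Fintype.card q - ((Gsᵀ * G)ᵀ * (Gsᵀ * G)).trace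
  set k : ℝ := (Fintype.card q : ℝ)
  have hB : B.IsHermitian := by
    simp only [B, IsHermitian, conjTranspose_eq_transpose_of_trivial, transpose_sub, transpose_mul,
      transpose_transpose]
  have hBB : (B * B).trace = 2 * E := trace_sq_sub_mul_transpose hG hGs
  have hE : 0 ≤ E := by
    have : 0 ≤ (B * B).trace := by
      rw [hB.trace_mul_self_eq_sum_sq_eigenvalues]; positivity
    linarith
  have hrank : (B.rank : ℝ) ≤ 2 * k := by
    have hle : ∀ X : Matrix p q ℝ, (X * Xᵀ).rank ≤ Fintype.card q := fun X =>
      (rank_mul_le_left X Xᵀ).trans (rank_le_card_width X)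
    have : B.rank ≤ Fintype.card q + Fintype.card q :=
      (rank_sub_le _ _).trans (add_le_add (hle G) (hle Gs))
    show (B.rank : ℝ) ≤ 2 * (Fintype.card q : ℝ)
    exact_mod_cast (by omega : B.rank ≤ 2 * Fintype.card q)
  have hω : 0 ≤ opNorm Δ := norm_nonneg _
  have key : E ≤ opNorm Δ * (2 * (√k * √E)) := calc
    E ≤ (Δ * B).trace := sub_trace_le_trace_mul_sub hGs Δ hopt
    _ ≤ opNorm Δ * (√(B.rank : ℝ) * √(B * B).trace) := hB.trace_mul_le_opNorm_mul Δ
    _ ≤ opNorm Δ * (√(2 * k) * √(2 * E)) := by rw [hBB]; gcongr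
    _ = opNorm Δ * (2 * (√k * √E)) := by
      rw [Real.sqrt_mul zero_le_two, Real.sqrt_mul zero_le_two, mul_mul_mul_comm,
        Real.mul_self_sqrt zero_le_two]
  nlinarith [Real.sq_sqrt hE, Real.sq_sqrt (Nat.cast_nonneg (Fintype.card q) : (0 : ℝ) ≤ k),
    sq_nonneg (√E - 2 * opNorm Δ * √k), Real.sqrt_nonneg E, Real.sqrt_nonneg k]

end ScaledIsometry

end Matrix

theorem stmt_8_general (n d : ℕ) (G Gs : Matrix (Fin n × Fin d) (Fin d) ℝ)
    (Δ C : Matrix (Fin n × Fin d) (Fin n × Fin d) ℝ)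
    (hG : Gᵀ * G = (n : ℝ) • (1 : Matrix (Fin d) (Fin d) ℝ))
    (hGs : ∀ i, (blk Gs i)ᵀ * blk Gs i = 1)
    (hC : C = Gs * Gsᵀ + Δ)
    (hopt : Matrix.trace (Gᵀ * C * G) ≥ Matrix.trace (Gsᵀ * C * Gs)) :
    ∀ l : Fin d,
      (n : ℝ) - 8 * d * opNorm Δ ^ 2 / n ≤ singularValues (Gsᵀ * G) l ∧
      singularValues (Gsᵀ * G) l ≤ n := by
  have hGs' : Gsᵀ * Gs = (n : ℝ) • 1 := by
    simp [transpose_mul_self_eq_sum_blk, hGs, Nat.cast_smul_eq_nsmul]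
  have hM := isHermitian_conjTranspose_mul_self (Gsᵀ * G)
  have hup : ∀ l, hM.eigenvalues l ≤ (n : ℝ) ^ 2 := fun l => by
    simpa [sq] using eigenvalues_transpose_mul_le hGs' hG (Nat.cast_nonneg n) l
  have hdef := sq_mul_card_sub_trace_le hG hGs' Δ (hC ▸ hopt)
  rw [Fintype.card_fin, ← conjTranspose_eq_transpose_of_trivial] at hdef
  intro l
  have hlow : (n : ℝ) ^ 2 - 4 * d * opNorm Δ ^ 2 ≤ hM.eigenvalues l := by
    have := hM.sub_eigenvalues_le_card_mul_sub_trace hup l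
    rw [Fintype.card_fin] at this
    linarith
  refine ⟨?_, Real.sqrt_le_left (Nat.cast_nonneg n) |>.mpr (hup l)⟩
  calc (n : ℝ) - 8 * d * opNorm Δ ^ 2 / n ≤ n - 4 * d * opNorm Δ ^ 2 / n := by
        have : 0 ≤ 4 * d * opNorm Δ ^ 2 / n := by positivity
        linarith [show 8 * d * opNorm Δ ^ 2 / n = 2 * (4 * d * opNorm Δ ^ 2 / n) by ring]
    _ ≤ singularValues (Gsᵀ * G) l := Real.sub_div_le_sqrt (Nat.cast_nonneg n) hlow (hup l)

/-- Under the ℓ₂-estimation setting, every singular value of `G*ᵀG` lies in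
`[n − 8d‖Δ‖²/n, n]`. -/
theorem stmt_8 (n d : ℕ) (G Gs : Matrix (Fin n × Fin d) (Fin d) ℝ)
    (Δ C : Matrix (Fin n × Fin d) (Fin n × Fin d) ℝ)
    (hG : Gᵀ * G = (n : ℝ) • (1 : Matrix (Fin d) (Fin d) ℝ))
    (hGs : ∀ i, (blk Gs i)ᵀ * blk Gs i = 1)
    (hΔ : Δᵀ = Δ) (hC : C = Gs * Gsᵀ + Δ)
    (hopt : Matrix.trace (Gᵀ * C * G) ≥ Matrix.trace (Gsᵀ * C * Gs)) :
    ∀ l : Fin d,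
      (n : ℝ) - 8 * d * opNorm Δ ^ 2 / n ≤ singularValues (Gsᵀ * G) l ∧
      singularValues (Gsᵀ * G) l ≤ n :=
  stmt_8_general n d G Gs Δ C hG hGs hC hopt
end

section
/- For any two d×d orthonormal matrices X, Y (viewed as unit-Frobenius-norm tangent vectors), the sectional curvature of SO(d) with bi-invariant metric satisfies K(X,Y) = (1/4)‖[X,Y]‖_F² ≤ 1/2, where [X,Y] = XY − YX is the commutator; in particular ‖XY − YX‖_F² ≤ 2‖X‖_F²‖Y‖_F² for all real d×d matrices X, Y. -/
/-!
Shifting `Y` by a scalar does not change `XY - YX`, so `Y` may be taken invertible, with a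
singular value decomposition `Y V = U Σ`, `U, V` orthogonal. In these bases the commutator has
entries `p_ab σ_b - σ_a q_ab`, where `P = UᵀXU` and `Q = VᵀXV`. Off the diagonal, Cauchy–Schwarz
bounds such an entry by `(σ_a² + σ_b²)(p_ab² + q_ab²)`. Split `X = S + W` into its symmetric and
skew parts. The skew part then contributes at most `2‖Y‖²‖W‖²`. For the symmetric part, row `a`
needs the variance bound `2‖Su‖² + 2‖Sv‖² ≤ 2‖S‖² + (⟪u, Su⟫ + ⟪v, Sv⟫)²` for the unit columns
`u = U e_a`, `v = V e_a`; in an eigenbasis of `S` this says that the variance of the eigenvalues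
under a probability vector is at most half their sum of squares, which follows by comparing with
the extreme eigenvalues.
-/

open Matrix

open Finset

section Rectangular

variable {m n : Type*} [Fintype m] [Fintype n]

lemma frobNorm_sq_s13 (A : Matrix m n ℝ) : frobNorm A ^ 2 = ∑ i, ∑ j, A i j ^ 2 :=
  Real.sq_sqrt (by positivity)

lemma frobNorm_sq_eq_trace (A : Matrix m n ℝ) : frobNorm A ^ 2 = (Aᵀ * A).trace := by
  rw [frobNorm_sq_s13]
  simp only [trace, Matrix.diag, mul_apply, transpose_apply, sq]
  exact sum_comm

end Rectangular

lemma two_mul_sum_sq_mul_le {ι : Type*} [Fintype ι] (μ w : ι → ℝ) (hw : ∀ k, 0 ≤ w k)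
    (hw_sum : ∑ k, w k = 2) :
    2 * ∑ k, μ k ^ 2 * w k ≤ 2 * ∑ k, μ k ^ 2 + (∑ k, μ k * w k) ^ 2 := by
  classical
  have hne : (univ : Finset ι).Nonempty := by
    by_contra h
    simp [not_nonempty_iff_eq_empty.mp h] at hw_sum
  obtain ⟨kM, -, hM⟩ := exists_max_image univ μ hne
  obtain ⟨km, -, hm⟩ := exists_min_image univ μ hne
  set M := μ kM
  set m := μ km
  set E := ∑ k, μ k * w k
  -- `μ k` lies between `m` and `M`, so `μ k ^ 2 ≤ (M + m) μ k - M m`.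
  have hsq_le : ∑ k, μ k ^ 2 * w k ≤ (M + m) * E - 2 * (M * m) := by
    calc ∑ k, μ k ^ 2 * w k ≤ ∑ k, ((M + m) * μ k - M * m) * w k := by
          refine sum_le_sum fun k _ => mul_le_mul_of_nonneg_right ?_ (hw k)
          nlinarith [hM k (mem_univ k), hm k (mem_univ k)]
      _ = (M + m) * E - 2 * (M * m) := by
          rw [← hw_sum, mul_sum, sum_mul, ← sum_sub_distrib]
          exact sum_congr rfl fun k _ => by ring
  by_cases hkm : kM = km
  · have hMm : m = M := congrArg μ hkm.symm
    rw [hMm] at hsq_le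
    have : M ^ 2 ≤ ∑ k, μ k ^ 2 := single_le_sum (fun k _ => sq_nonneg (μ k)) (mem_univ kM)
    nlinarith [sq_nonneg (E - 2 * M), sq_nonneg M]
  · have : M ^ 2 + m ^ 2 ≤ ∑ k, μ k ^ 2 := by
      rw [← sum_pair (f := fun k => μ k ^ 2) hkm]
      exact sum_le_sum_of_subset_of_nonneg (subset_univ _) fun k _ _ => sq_nonneg (μ k)
    nlinarith [sq_nonneg (E - (M + m))]

section Square

variable {n : Type*}

lemma apply_self_eq_zero_of_transpose_eq_neg {B : Matrix n n ℝ} (hB : Bᵀ = -B) (a : n) :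
    B a a = 0 := by
  have := congrFun (congrFun hB a) a
  rw [transpose_apply, Matrix.neg_apply] at this
  linarith

variable [Fintype n]

lemma transpose_conj (O A : Matrix n n ℝ) : (Oᵀ * A * O)ᵀ = Oᵀ * Aᵀ * O := by
  rw [transpose_mul, transpose_mul, transpose_transpose, Matrix.mul_assoc]

lemma sum_mul_add_sq_of_symm_of_skew {A B : Matrix n n ℝ} (hA : Aᵀ = A) (hB : Bᵀ = -B)
    (c : n → n → ℝ) (hc : ∀ a b, c a b = c b a) :
    ∑ a, ∑ b, c a b * (A + B) a b ^ 2 = ∑ a, ∑ b, c a b * (A a b ^ 2 + B a b ^ 2) := by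
  have hA' : ∀ a b, A b a = A a b := fun a b => by simpa using congrFun (congrFun hA a) b
  have hB' : ∀ a b, B b a = -B a b := fun a b => by simpa using congrFun (congrFun hB a) b
  -- the cross terms cancel under `a ↔ b`
  have hcross : ∑ a, ∑ b, c a b * (A a b * B a b) = 0 := by
    have : ∑ a, ∑ b, c a b * (A a b * B a b) = -∑ a, ∑ b, c a b * (A a b * B a b) :=
      calc ∑ a, ∑ b, c a b * (A a b * B a b) = ∑ a, ∑ b, c b a * (A b a * B b a) := sum_comm
        _ = -∑ a, ∑ b, c a b * (A a b * B a b) := by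
          simp only [← sum_neg_distrib]
          exact sum_congr rfl fun a _ => sum_congr rfl fun b _ => by
            rw [hc b a, hA' a b, hB' a b]; ring
    linarith
  have hexpand : ∀ a b, c a b * (A + B) a b ^ 2 =
      c a b * (A a b ^ 2 + B a b ^ 2) + 2 * (c a b * (A a b * B a b)) := fun a b => by
    rw [Matrix.add_apply]; ring
  simp only [hexpand, sum_add_distrib, ← mul_sum, hcross, mul_zero, add_zero]

lemma sum_add_mul_sq_of_symm {A : Matrix n n ℝ} (hA : Aᵀ = A) (g : n → ℝ) :
    ∑ a, ∑ b, (g a + g b) * A a b ^ 2 = 2 * ∑ a, g a * (A * A) a a := by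
  have hA' : ∀ a b, A b a = A a b := fun a b => by simpa using congrFun (congrFun hA a) b
  have hswap : ∑ a, ∑ b, g b * A a b ^ 2 = ∑ a, ∑ b, g a * A a b ^ 2 := by
    rw [sum_comm]
    exact sum_congr rfl fun a _ => sum_congr rfl fun b _ => by rw [hA' a b]
  calc ∑ a, ∑ b, (g a + g b) * A a b ^ 2
      = ∑ a, ∑ b, g a * A a b ^ 2 + ∑ a, ∑ b, g b * A a b ^ 2 := by
        simp only [add_mul, sum_add_distrib]
    _ = 2 * ∑ a, g a * (A * A) a a := by
        rw [hswap, ← two_mul]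
        simp only [mul_apply, hA', mul_sum, sq]

lemma sum_add_mul_sq_le_of_skew {B : Matrix n n ℝ} (hB : Bᵀ = -B) {g : n → ℝ}
    (hg : ∀ a, 0 ≤ g a) :
    ∑ a, ∑ b, (g a + g b) * B a b ^ 2 ≤ (∑ c, g c) * frobNorm B ^ 2 := by
  classical
  rw [frobNorm_sq_s13, mul_sum]
  refine sum_le_sum fun a _ => ?_
  rw [mul_sum]
  refine sum_le_sum fun b _ => ?_
  by_cases hab : a = b
  · subst hab
    simp [apply_self_eq_zero_of_transpose_eq_neg hB]
  · refine mul_le_mul_of_nonneg_right ?_ (sq_nonneg _)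
    rw [← sum_pair hab]
    exact sum_le_sum_of_subset_of_nonneg (subset_univ _) fun c _ _ => hg c

variable [DecidableEq n]

lemma frobNorm_sq_transpose_mul_mul {U V A : Matrix n n ℝ} (hU : Uᵀ * U = 1)
    (hV : Vᵀ * V = 1) : frobNorm (Uᵀ * A * V) ^ 2 = frobNorm A ^ 2 := by
  have hU' : U * Uᵀ = 1 := mul_eq_one_comm.mp hU
  have hconj : (Uᵀ * A * V)ᵀ * (Uᵀ * A * V) = Vᵀ * (Aᵀ * A) * V := by
    simp only [transpose_mul, transpose_transpose, Matrix.mul_assoc]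
    rw [← Matrix.mul_assoc U, hU', Matrix.one_mul]
  rw [frobNorm_sq_eq_trace, frobNorm_sq_eq_trace, hconj, trace_mul_cycle,
    mul_eq_one_comm.mp hV, Matrix.one_mul]

lemma frobNorm_sq_diagonal (μ : n → ℝ) : frobNorm (diagonal μ) ^ 2 = ∑ k, μ k ^ 2 := by
  simp [frobNorm_sq_s13, diagonal_apply, ite_pow]

lemma transpose_mul_conj_mul {V : Matrix n n ℝ} (hV : Vᵀ * V = 1) (D : Matrix n n ℝ) :
    Vᵀ * (V * D * Vᵀ) * V = D := by
  simp only [Matrix.mul_assoc]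
  rw [hV, Matrix.mul_one, ← Matrix.mul_assoc, hV, Matrix.one_mul]

lemma transpose_mul_diagonal_mul_apply_self (O : Matrix n n ℝ) (μ : n → ℝ) (a : n) :
    (Oᵀ * diagonal μ * O) a a = ∑ k, μ k * O k a ^ 2 := by
  simp only [mul_apply, transpose_apply, diagonal_apply, mul_ite, mul_zero, sum_ite_eq',
    mem_univ, if_true, sq]
  exact sum_congr rfl fun k _ => by ring

lemma Matrix.IsHermitian.exists_orthogonal_diagonalization {S : Matrix n n ℝ}
    (hS : S.IsHermitian) :
    ∃ W : Matrix n n ℝ, Wᵀ * W = 1 ∧ S = W * diagonal hS.eigenvalues * Wᵀ := by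
  refine ⟨hS.eigenvectorUnitary, ?_, ?_⟩
  · simpa [star_eq_conjTranspose] using (mem_unitaryGroup_iff'.mp hS.eigenvectorUnitary.2)
  · conv_lhs => rw [hS.spectral_theorem]
    simp [Unitary.conjStarAlgAut_apply, star_eq_conjTranspose]

/- In an eigenbasis of `S` this is `two_mul_sum_sq_mul_le` for the eigenvalues, with the weights
`(Wᵀ U) k a ^ 2 + (Wᵀ V) k a ^ 2`, which sum to `2`. -/
lemma two_mul_conj_sq_apply_add_le {S U V : Matrix n n ℝ} (hS : S.IsHermitian)
    (hU : Uᵀ * U = 1) (hV : Vᵀ * V = 1) (a : n) :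
    2 * (Uᵀ * (S * S) * U) a a + 2 * (Vᵀ * (S * S) * V) a a ≤
      2 * frobNorm S ^ 2 + ((Uᵀ * S * U) a a + (Vᵀ * S * V) a a) ^ 2 := by
  obtain ⟨W, hW, hSW⟩ := hS.exists_orthogonal_diagonalization
  set μ := hS.eigenvalues
  have hW' : W * Wᵀ = 1 := mul_eq_one_comm.mp hW
  have hconj : ∀ O D : Matrix n n ℝ, Oᵀ * (W * D * Wᵀ) * O = (Wᵀ * O)ᵀ * D * (Wᵀ * O) :=
    fun O D => by simp only [transpose_mul, transpose_transpose, Matrix.mul_assoc]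
  have hSS : S * S = W * diagonal (μ ^ 2) * Wᵀ := by
    rw [hSW]
    simp only [Matrix.mul_assoc]
    rw [← Matrix.mul_assoc Wᵀ, hW, Matrix.one_mul, ← Matrix.mul_assoc (diagonal μ),
      diagonal_mul_diagonal, sq]
    rfl
  have hunit : ∀ O : Matrix n n ℝ, Oᵀ * O = 1 → ∑ k, (Wᵀ * O) k a ^ 2 = 1 := by
    intro O hO
    have h1 : (Wᵀ * O)ᵀ * (Wᵀ * O) = 1 := by
      rw [transpose_mul, transpose_transpose, Matrix.mul_assoc, ← Matrix.mul_assoc W, hW',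
        Matrix.one_mul, hO]
    simpa only [mul_apply, transpose_apply, one_apply_eq, sq] using congrFun (congrFun h1 a) a
  have hnorm : frobNorm S ^ 2 = ∑ k, μ k ^ 2 := by
    rw [← frobNorm_sq_transpose_mul_mul (A := S) hW hW, ← frobNorm_sq_diagonal]
    congr 2
    rw [hSW, transpose_mul_conj_mul hW]
  have key := two_mul_sum_sq_mul_le μ (fun k => (Wᵀ * U) k a ^ 2 + (Wᵀ * V) k a ^ 2)
    (fun k => by positivity) (by rw [sum_add_distrib, hunit U hU, hunit V hV]; norm_num)
  rw [hnorm, hSS, hconj, hconj, hSW, hconj, hconj, transpose_mul_diagonal_mul_apply_self,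
    transpose_mul_diagonal_mul_apply_self, transpose_mul_diagonal_mul_apply_self,
    transpose_mul_diagonal_mul_apply_self]
  simp only [mul_add, sum_add_distrib] at key
  simp only [Pi.pow_apply]
  linarith

lemma sum_add_mul_conj_sq_sub_le_of_symm {S U V : Matrix n n ℝ} (hS : Sᵀ = S)
    (hU : Uᵀ * U = 1) (hV : Vᵀ * V = 1) {g : n → ℝ} (hg : ∀ a, 0 ≤ g a) :
    ∑ a, ∑ b, (g a + g b) * ((Uᵀ * S * U) a b ^ 2 + (Vᵀ * S * V) a b ^ 2) -
        ∑ a, g a * ((Uᵀ * S * U) a a + (Vᵀ * S * V) a a) ^ 2 ≤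
      2 * (∑ c, g c) * frobNorm S ^ 2 := by
  have hH : S.IsHermitian := by
    rwa [IsHermitian, conjTranspose_eq_transpose_of_trivial]
  have hconj_symm : ∀ O : Matrix n n ℝ, (Oᵀ * S * O)ᵀ = Oᵀ * S * O := fun O => by
    rw [transpose_conj, hS]
  have hconj_sq : ∀ O : Matrix n n ℝ, Oᵀ * O = 1 →
      Oᵀ * S * O * (Oᵀ * S * O) = Oᵀ * (S * S) * O := fun O hO => by
    rw [Matrix.mul_assoc, ← Matrix.mul_assoc O, ← Matrix.mul_assoc O, mul_eq_one_comm.mp hO]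
    simp only [Matrix.one_mul, Matrix.mul_assoc]
  simp only [mul_add, sum_add_distrib]
  rw [sum_add_mul_sq_of_symm (hconj_symm U), sum_add_mul_sq_of_symm (hconj_symm V),
    hconj_sq U hU, hconj_sq V hV]
  calc 2 * ∑ a, g a * (Uᵀ * (S * S) * U) a a + 2 * ∑ a, g a * (Vᵀ * (S * S) * V) a a -
        ∑ a, g a * ((Uᵀ * S * U) a a + (Vᵀ * S * V) a a) ^ 2
      = ∑ a, g a * (2 * (Uᵀ * (S * S) * U) a a + 2 * (Vᵀ * (S * S) * V) a a -
          ((Uᵀ * S * U) a a + (Vᵀ * S * V) a a) ^ 2) := by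
        rw [mul_sum, mul_sum, ← sum_add_distrib, ← sum_sub_distrib]
        exact sum_congr rfl fun a _ => by ring
    _ ≤ ∑ a, g a * (2 * frobNorm S ^ 2) := by
        refine sum_le_sum fun a _ => mul_le_mul_of_nonneg_left ?_ (hg a)
        linarith [two_mul_conj_sq_apply_add_le hH hU hV a]
    _ = 2 * (∑ c, g c) * frobNorm S ^ 2 := by
        rw [← sum_mul]; ring

lemma sum_add_mul_conj_sq_le_of_skew {W U V : Matrix n n ℝ} (hW : Wᵀ = -W)
    (hU : Uᵀ * U = 1) (hV : Vᵀ * V = 1) {g : n → ℝ} (hg : ∀ a, 0 ≤ g a) :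
    ∑ a, ∑ b, (g a + g b) * ((Uᵀ * W * U) a b ^ 2 + (Vᵀ * W * V) a b ^ 2) ≤
      2 * (∑ c, g c) * frobNorm W ^ 2 := by
  have hconj_skew : ∀ O : Matrix n n ℝ, (Oᵀ * W * O)ᵀ = -(Oᵀ * W * O) := fun O => by
    rw [transpose_conj, hW, Matrix.mul_neg, Matrix.neg_mul]
  have hU' := sum_add_mul_sq_le_of_skew (hconj_skew U) hg
  have hV' := sum_add_mul_sq_le_of_skew (hconj_skew V) hg
  rw [frobNorm_sq_transpose_mul_mul hU hU] at hU'
  rw [frobNorm_sq_transpose_mul_mul hV hV] at hV'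
  simp only [mul_add, sum_add_distrib]
  linarith

lemma exists_svd_of_det_ne_zero {Y : Matrix n n ℝ} (hY : Y.det ≠ 0) :
    ∃ (U V : Matrix n n ℝ) (σ : n → ℝ),
      Uᵀ * U = 1 ∧ Vᵀ * V = 1 ∧ Y * V = U * diagonal σ := by
  have hpd : (Yᵀ * Y).PosDef := by
    simpa [conjTranspose_eq_transpose_of_trivial] using PosDef.conjTranspose_mul_self Y
      (mulVec_injective_iff_isUnit.mpr ((isUnit_iff_isUnit_det Y).mpr hY.isUnit))
  obtain ⟨V, hV, hYY⟩ := hpd.isHermitian.exists_orthogonal_diagonalization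
  set ev := hpd.isHermitian.eigenvalues
  set σ : n → ℝ := fun a => √(ev a)
  have hσ : ∀ a, σ a ≠ 0 := fun a => (Real.sqrt_pos.mpr (hpd.eigenvalues_pos a)).ne'
  have hσ_sq : ∀ a, σ a * σ a = ev a := fun a => Real.mul_self_sqrt (hpd.eigenvalues_pos a).le
  refine ⟨Y * V * diagonal σ⁻¹, V, σ, ?_, hV, ?_⟩
  · calc (Y * V * diagonal σ⁻¹)ᵀ * (Y * V * diagonal σ⁻¹)
        = diagonal σ⁻¹ * (Vᵀ * (Yᵀ * Y) * V) * diagonal σ⁻¹ := by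
          simp only [transpose_mul, diagonal_transpose, Matrix.mul_assoc]
      _ = diagonal (σ⁻¹ * ev * σ⁻¹) := by
          rw [hYY, transpose_mul_conj_mul hV, diagonal_mul_diagonal, diagonal_mul_diagonal]
          rfl
      _ = 1 := by
          rw [← diagonal_one]
          congr 1
          ext a
          simp [← hσ_sq a, hσ a]
  · rw [Matrix.mul_assoc, diagonal_mul_diagonal,
      show (fun a => σ⁻¹ a * σ a) = fun _ => 1 from funext fun a => inv_mul_cancel₀ (hσ a),
      diagonal_one, Matrix.mul_one]

/- Off the diagonal this is Cauchy–Schwarz; on it, `(p - q)² = 2 (p² + q²) - (p + q)²`. -/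
lemma frobNorm_sq_mul_diagonal_sub_diagonal_mul_le (P Q : Matrix n n ℝ) (σ : n → ℝ) :
    frobNorm (P * diagonal σ - diagonal σ * Q) ^ 2 ≤
      ∑ a, ∑ b, (σ a ^ 2 + σ b ^ 2) * (P a b ^ 2 + Q a b ^ 2) -
        ∑ a, σ a ^ 2 * (P a a + Q a a) ^ 2 := by
  have hdiag : ∑ a, σ a ^ 2 * (P a a + Q a a) ^ 2 =
      ∑ a, ∑ b, if a = b then σ a ^ 2 * (P a a + Q a a) ^ 2 else 0 := by
    simp only [sum_ite_eq, mem_univ, if_true]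
  rw [frobNorm_sq_s13, hdiag, ← sum_sub_distrib]
  refine sum_le_sum fun a _ => ?_
  rw [← sum_sub_distrib]
  refine sum_le_sum fun b _ => ?_
  simp only [Matrix.sub_apply, mul_diagonal, diagonal_mul]
  split_ifs with hab
  · subst hab; nlinarith
  · nlinarith [sq_nonneg (σ a * P a b + σ b * Q a b)]

lemma sum_add_mul_conj_sq_sub_le (X : Matrix n n ℝ) {U V : Matrix n n ℝ} (hU : Uᵀ * U = 1)
    (hV : Vᵀ * V = 1) {g : n → ℝ} (hg : ∀ a, 0 ≤ g a) :
    ∑ a, ∑ b, (g a + g b) * ((Uᵀ * X * U) a b ^ 2 + (Vᵀ * X * V) a b ^ 2) -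
        ∑ a, g a * ((Uᵀ * X * U) a a + (Vᵀ * X * V) a a) ^ 2 ≤
      2 * (∑ c, g c) * frobNorm X ^ 2 := by
  set S : Matrix n n ℝ := (1 / 2 : ℝ) • (X + Xᵀ)
  set W : Matrix n n ℝ := (1 / 2 : ℝ) • (X - Xᵀ)
  have hX : X = S + W := by
    ext i j
    simp only [S, W, Matrix.add_apply, Matrix.smul_apply, Matrix.sub_apply, smul_eq_mul]
    ring
  have hS : Sᵀ = S := by
    simp only [S, transpose_smul, transpose_add, transpose_transpose, add_comm]
  have hW : Wᵀ = -W := by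
    simp only [W, transpose_smul, transpose_sub, transpose_transpose, ← smul_neg, neg_sub]
  have hX_norm : frobNorm X ^ 2 = frobNorm S ^ 2 + frobNorm W ^ 2 := by
    have := sum_mul_add_sq_of_symm_of_skew hS hW (fun _ _ => 1) fun _ _ => rfl
    simp only [one_mul, sum_add_distrib] at this
    rw [frobNorm_sq_s13, frobNorm_sq_s13, frobNorm_sq_s13, hX, this]
  have hW_conj : ∀ O : Matrix n n ℝ, (Oᵀ * W * O)ᵀ = -(Oᵀ * W * O) := fun O => by
    rw [transpose_conj, hW, Matrix.mul_neg, Matrix.neg_mul]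
  have hsplit : ∀ O : Matrix n n ℝ, ∑ a, ∑ b, (g a + g b) * (Oᵀ * X * O) a b ^ 2 =
      ∑ a, ∑ b, (g a + g b) * ((Oᵀ * S * O) a b ^ 2 + (Oᵀ * W * O) a b ^ 2) := fun O => by
    rw [hX, Matrix.mul_add, Matrix.add_mul]
    exact sum_mul_add_sq_of_symm_of_skew (by rw [transpose_conj, hS]) (hW_conj O) _
      fun a b => add_comm _ _
  have hdiag : ∀ (O : Matrix n n ℝ) a, (Oᵀ * X * O) a a = (Oᵀ * S * O) a a := fun O a => by
    rw [hX, Matrix.mul_add, Matrix.add_mul, Matrix.add_apply,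
      apply_self_eq_zero_of_transpose_eq_neg (hW_conj O), add_zero]
  calc ∑ a, ∑ b, (g a + g b) * ((Uᵀ * X * U) a b ^ 2 + (Vᵀ * X * V) a b ^ 2) -
        ∑ a, g a * ((Uᵀ * X * U) a a + (Vᵀ * X * V) a a) ^ 2
      = (∑ a, ∑ b, (g a + g b) * ((Uᵀ * S * U) a b ^ 2 + (Vᵀ * S * V) a b ^ 2) -
          ∑ a, g a * ((Uᵀ * S * U) a a + (Vᵀ * S * V) a a) ^ 2) +
        ∑ a, ∑ b, (g a + g b) * ((Uᵀ * W * U) a b ^ 2 + (Vᵀ * W * V) a b ^ 2) := by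
        simp only [mul_add, sum_add_distrib, hdiag] at hsplit ⊢
        rw [hsplit U, hsplit V]
        ring
    _ ≤ 2 * (∑ c, g c) * frobNorm S ^ 2 + 2 * (∑ c, g c) * frobNorm W ^ 2 :=
        add_le_add (sum_add_mul_conj_sq_sub_le_of_symm hS hU hV hg)
          (sum_add_mul_conj_sq_le_of_skew hW hU hV hg)
    _ = 2 * (∑ c, g c) * frobNorm X ^ 2 := by rw [hX_norm]; ring

theorem frobNorm_commutator_sq_le_of_mul_eq_mul_diagonal {X Y U V : Matrix n n ℝ} {σ : n → ℝ}
    (hU : Uᵀ * U = 1) (hV : Vᵀ * V = 1) (hYV : Y * V = U * diagonal σ) :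
    frobNorm (X * Y - Y * X) ^ 2 ≤ 2 * frobNorm X ^ 2 * frobNorm Y ^ 2 := by
  have hUY : Uᵀ * Y = diagonal σ * Vᵀ := by
    calc Uᵀ * Y = Uᵀ * (Y * V) * Vᵀ := by
          rw [Matrix.mul_assoc, Matrix.mul_assoc, mul_eq_one_comm.mp hV, Matrix.mul_one]
      _ = diagonal σ * Vᵀ := by rw [hYV, ← Matrix.mul_assoc, hU, Matrix.one_mul]
  have hY : frobNorm Y ^ 2 = ∑ a, σ a ^ 2 := by
    rw [← frobNorm_sq_transpose_mul_mul hU hV, hUY, Matrix.mul_assoc, hV, Matrix.mul_one,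
      frobNorm_sq_diagonal]
  have hcomm : Uᵀ * (X * Y - Y * X) * V =
      Uᵀ * X * U * diagonal σ - diagonal σ * (Vᵀ * X * V) := by
    rw [Matrix.mul_sub, Matrix.sub_mul]
    congr 1
    · rw [Matrix.mul_assoc, Matrix.mul_assoc, hYV, ← Matrix.mul_assoc, ← Matrix.mul_assoc]
    · rw [← Matrix.mul_assoc, hUY]; simp only [Matrix.mul_assoc]
  calc frobNorm (X * Y - Y * X) ^ 2
      = frobNorm (Uᵀ * X * U * diagonal σ - diagonal σ * (Vᵀ * X * V)) ^ 2 := by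
        rw [← hcomm, frobNorm_sq_transpose_mul_mul hU hV]
    _ ≤ ∑ a, ∑ b, (σ a ^ 2 + σ b ^ 2) * ((Uᵀ * X * U) a b ^ 2 + (Vᵀ * X * V) a b ^ 2) -
          ∑ a, σ a ^ 2 * ((Uᵀ * X * U) a a + (Vᵀ * X * V) a a) ^ 2 :=
        frobNorm_sq_mul_diagonal_sub_diagonal_mul_le _ _ _
    _ ≤ 2 * (∑ a, σ a ^ 2) * frobNorm X ^ 2 :=
        sum_add_mul_conj_sq_sub_le X hU hV fun a => sq_nonneg _
    _ = 2 * frobNorm X ^ 2 * frobNorm Y ^ 2 := by rw [hY]; ring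

open Filter Topology in
lemma eventually_det_add_smul_one_ne_zero {K : Type*} [Field K] [TopologicalSpace K]
    [T1Space K] (Y : Matrix n n K) (a : K) :
    ∀ᶠ t in 𝓝[≠] a, (Y + t • (1 : Matrix n n K)).det ≠ 0 := by
  have hdet : ∀ t, (Y + t • (1 : Matrix n n K)).det = (-Y).charpoly.eval t := by
    intro t
    rw [eval_charpoly, sub_neg_eq_add, add_comm, smul_one_eq_diagonal, scalar_apply]
  have hroots : {t | (-Y).charpoly.IsRoot t}.Finite :=
    Polynomial.finite_setOfPred_isRoot (charpoly_monic _).ne_zero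
  have := hroots.to_subtype
  filter_upwards [nhdsNE_of_nhdsNE_sdiff_finite univ_mem this] with t ht
  rw [hdet]
  exact ht.2

open Filter Topology in
theorem frobNorm_commutator_sq_le (X Y : Matrix n n ℝ) :
    frobNorm (X * Y - Y * X) ^ 2 ≤ 2 * frobNorm X ^ 2 * frobNorm Y ^ 2 := by
  have hcomm : ∀ t : ℝ, X * (Y + t • 1) - (Y + t • 1) * X = X * Y - Y * X := fun t => by
    simp only [Matrix.mul_add, Matrix.add_mul, Matrix.mul_smul, Matrix.smul_mul, Matrix.mul_one,
      Matrix.one_mul]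
    abel
  have hlim : Tendsto (fun t : ℝ => 2 * frobNorm X ^ 2 * frobNorm (Y + t • 1) ^ 2) (𝓝[≠] 0)
      (𝓝 (2 * frobNorm X ^ 2 * frobNorm Y ^ 2)) := by
    have hcont : Continuous fun t : ℝ => 2 * frobNorm X ^ 2 * frobNorm (Y + t • 1) ^ 2 := by
      unfold frobNorm; fun_prop
    have := hcont.tendsto 0
    rw [zero_smul, add_zero] at this
    exact this.mono_left nhdsWithin_le_nhds
  refine ge_of_tendsto hlim ((eventually_det_add_smul_one_ne_zero Y 0).mono fun t ht => ?_)
  obtain ⟨U, V, σ, hU, hV, hYV⟩ := exists_svd_of_det_ne_zero ht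
  simpa only [hcomm] using frobNorm_commutator_sq_le_of_mul_eq_mul_diagonal (X := X) hU hV hYV

end Square

/-- The Böttcher–Wenzel commutator bound `‖XY − YX‖_F² ≤ 2‖X‖_F²‖Y‖_F²` for all real
square matrices; in particular, the sectional curvature `K(X,Y) = (1/4)‖[X,Y]‖_F²` of
`SO(d)` at unit-Frobenius-norm tangent vectors is at most `1/2`. -/
theorem stmt_13 (d : ℕ) :
    (∀ X Y : Matrix (Fin d) (Fin d) ℝ,
      frobNorm (X * Y - Y * X) ^ 2 ≤ 2 * frobNorm X ^ 2 * frobNorm Y ^ 2) ∧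
    (∀ X Y : Matrix (Fin d) (Fin d) ℝ, frobNorm X = 1 → frobNorm Y = 1 →
      (1 / 4) * frobNorm (X * Y - Y * X) ^ 2 ≤ 1 / 2) := by
  refine ⟨frobNorm_commutator_sq_le, fun X Y hX hY => ?_⟩
  have := frobNorm_commutator_sq_le X Y
  rw [hX, hY] at this
  linarith
end
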